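/- (Comparison with the rate of Zhang and Xiao.) Let κ_j > 0 for j = 1,…,n, n ≥ 1, and ρ ≥ 1/2 with ρ < 1. Define θ_ZX = 1 − 1/(n + n max_j √κ_j) and θ_uni = 1 − 2/(n + n max_j √(1 + κ_j/ρ²)). Then θ_ZX ≥ θ_uni. -/
import Mathlib


/-- Comparison with the rate of Zhang and Xiao.
For `κ_j > 0`, `n ≥ 1` and `1/2 ≤ ρ < 1`, the rates
`θ_ZX = 1 − 1/(n + n max_j √κ_j)` and
`θ_uni = 1 − 2/(n + n max_j √(1 + κ_j/ρ²))` satisfy `θ_ZX ≥ θ_uni`. -/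
theorem spdhg_rate_beats_zhang_xiao {n : ℕ} (hn : 1 ≤ n) (κ : Fin n → ℝ) (ρ : ℝ)
    (hκ : ∀ j, 0 < κ j) (hρ : ρ ∈ Set.Ico (1/2 : ℝ) 1) :
    let θZX : ℝ := 1 - 1 / ((n : ℝ) + (n : ℝ) *
      Finset.univ.sup' (Finset.univ_nonempty_iff.mpr ⟨⟨0, by omega⟩⟩)
        (fun j => Real.sqrt (κ j)))
    let θuni : ℝ := 1 - 2 / ((n : ℝ) + (n : ℝ) *
      Finset.univ.sup' (Finset.univ_nonempty_iff.mpr ⟨⟨0, by omega⟩⟩)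
        (fun j => Real.sqrt (1 + κ j / ρ ^ 2)))
    θuni ≤ θZX := by
  intro θZX θuni
  have hne : (Finset.univ : Finset (Fin n)).Nonempty :=
    Finset.univ_nonempty_iff.mpr ⟨⟨0, by omega⟩⟩
  set M1 : ℝ := Finset.univ.sup' hne (fun j => Real.sqrt (κ j)) with hM1
  set M2 : ℝ := Finset.univ.sup' hne (fun j => Real.sqrt (1 + κ j / ρ ^ 2)) with hM2
  have hρpos : (0 : ℝ) < ρ := lt_of_lt_of_le (by norm_num) hρ.1
  have hρ2 : (1/4 : ℝ) ≤ ρ ^ 2 := by nlinarith [hρ.1]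
  have hnpos : (0 : ℝ) < n := by exact_mod_cast hn
  -- M1 ≥ 0
  have hM1nn : 0 ≤ M1 := by
    obtain ⟨j, -⟩ := hne
    exact le_trans (Real.sqrt_nonneg (κ j))
      (Finset.le_sup' (fun j => Real.sqrt (κ j)) (Finset.mem_univ j))
  -- M2 ≤ 1 + 2*M1
  have hkey : M2 ≤ 1 + 2 * M1 := by
    apply Finset.sup'_le
    intro j _
    have h1 : κ j / ρ ^ 2 ≤ 4 * κ j := by
      rw [div_le_iff₀ (by positivity)]
      nlinarith [(hκ j).le]
    have h2 : Real.sqrt (1 + κ j / ρ ^ 2) ≤ Real.sqrt (1 + 4 * κ j) :=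
      Real.sqrt_le_sqrt (by linarith)
    have h3 : Real.sqrt (1 + 4 * κ j) ≤ 1 + 2 * Real.sqrt (κ j) := by
      have hs := Real.sq_sqrt (hκ j).le
      have hsn := Real.sqrt_nonneg (κ j)
      have : (1 + 4 * κ j) ≤ (1 + 2 * Real.sqrt (κ j)) ^ 2 := by nlinarith
      calc Real.sqrt (1 + 4 * κ j) ≤ Real.sqrt ((1 + 2 * Real.sqrt (κ j)) ^ 2) :=
            Real.sqrt_le_sqrt this
        _ = 1 + 2 * Real.sqrt (κ j) := Real.sqrt_sq (by linarith)
    have h4 : Real.sqrt (κ j) ≤ M1 := Finset.le_sup' (fun j => Real.sqrt (κ j)) (Finset.mem_univ j)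
    linarith
  have hM2nn : 0 ≤ M2 := by
    obtain ⟨j⟩ := hne
    exact le_trans (Real.sqrt_nonneg _) (Finset.le_sup' (fun j => Real.sqrt (1 + κ j / ρ ^ 2)) (Finset.mem_univ j))
  have hd1 : (0 : ℝ) < (n : ℝ) + (n : ℝ) * M1 := by nlinarith
  have hd2 : (0 : ℝ) < (n : ℝ) + (n : ℝ) * M2 := by nlinarith
  have hmain : 1 / ((n : ℝ) + (n : ℝ) * M1) ≤ 2 / ((n : ℝ) + (n : ℝ) * M2) := by
    rw [div_le_div_iff₀ hd1 hd2]
    nlinarith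
  simp only [θZX, θuni]
  linarith
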